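/- Let F ∈ ℝ with F > 0. Then the three functions U_F, T_F and W_F are holomorphic on ℂ ∖ [−F,F]; that is, each of them is complex-differentiable at every point of the open set ℂ ∖ [−F,F] (DifferentiableOn ℂ). -/

import Mathlib

open scoped Classical

/-- The real segment `[−F, F]` viewed as a subset of `ℂ`. -/
def segC (F : ℝ) : Set ℂ := {z : ℂ | z.im = 0 ∧ -F ≤ z.re ∧ z.re ≤ F}

/-- `ℂ⁺`: the open right half-plane together with the nonnegative imaginary axis. -/
def Cplus : Set ℂ := {z : ℂ | 0 < z.re ∨ (z.re = 0 ∧ 0 ≤ z.im)}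

/-- `U_F(z) = (z ∓ √(z²−F²))/F`, with `−` on `ℂ⁺` and `+` off `ℂ⁺`
(principal branch of the square root). -/
noncomputable def funU (F : ℝ) (z : ℂ) : ℂ :=
  if z ∈ Cplus then (z - (z ^ 2 - (F : ℂ) ^ 2) ^ ((1 : ℂ) / 2)) / F
  else (z + (z ^ 2 - (F : ℂ) ^ 2) ^ ((1 : ℂ) / 2)) / F

/-- `T_F(z) = ±√(z²−F²)`, with `+` on `ℂ⁺` and `−` off `ℂ⁺`. -/
noncomputable def funT (F : ℝ) (z : ℂ) : ℂ :=
  if z ∈ Cplus then (z ^ 2 - (F : ℂ) ^ 2) ^ ((1 : ℂ) / 2)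
  else -((z ^ 2 - (F : ℂ) ^ 2) ^ ((1 : ℂ) / 2))

/-- `W_F(z) = ((z+F)/(z−F))^{1/4} + ((z−F)/(z+F))^{1/4}` (principal fourth roots). -/
noncomputable def funW (F : ℝ) (z : ℂ) : ℂ :=
  ((z + F) / (z - F)) ^ ((1 : ℂ) / 4) + ((z - F) / (z + F)) ^ ((1 : ℂ) / 4)

/-! `W_F` is a sum of principal fourth roots of `(z+F)/(z−F)` and of its inverse, and this Möbius
map sends `ℂ ∖ [−F,F]` into the slit plane. `T_F` agrees with `√(z²−F²)` on `Re z > 0`, with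
`−√(z²−F²)` on `Re z < 0` and with `±i√(F²−z²)` on `±Im z > 0`; these four open half-planes cover
`ℂ ∖ [−F,F]`, and on each of them the radicand stays off `(−∞,0]`. Finally `U_F = (z − T_F)/F`. -/

open Complex Filter Topology Real

namespace Complex

lemma inv_mem_slitPlane {z : ℂ} (hz : z ∈ slitPlane) : z⁻¹ ∈ slitPlane := by
  rw [mem_slitPlane_iff_arg] at hz ⊢
  have : -arg z ≠ π := fun h ↦ (neg_pi_lt_arg z).ne' (by linarith)
  simp [arg_inv, hz.1, hz.2, this]

lemma neg_cpow_half_of_arg_neg_eq_sub_pi {w : ℂ} (h : arg (-w) = arg w - π) :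
    (-w) ^ (1 / 2 : ℂ) = -I * w ^ (1 / 2 : ℂ) := by
  have hw : w ≠ 0 := by rintro rfl; simp [pi_ne_zero] at h
  rw [cpow_def_of_ne_zero (neg_ne_zero.2 hw), cpow_def_of_ne_zero hw, ← exp_neg_pi_div_two_mul_I,
    ← exp_add, log, log, norm_neg, h]
  congr 1
  push_cast
  ring

lemma neg_cpow_half_of_arg_neg_eq_add_pi {w : ℂ} (h : arg (-w) = arg w + π) :
    (-w) ^ (1 / 2 : ℂ) = I * w ^ (1 / 2 : ℂ) := by
  have hw : w ≠ 0 := by rintro rfl; simp [pi_ne_zero.symm] at h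
  rw [cpow_def_of_ne_zero (neg_ne_zero.2 hw), cpow_def_of_ne_zero hw, ← exp_pi_div_two_mul_I,
    ← exp_add, log, log, norm_neg, h]
  congr 1
  push_cast
  ring

end Complex

section Segment

variable {F : ℝ} {z : ℂ}

lemma sq_sub_ofReal_sq_re (z : ℂ) (F : ℝ) :
    (z ^ 2 - (F : ℂ) ^ 2).re = z.re ^ 2 - z.im ^ 2 - F ^ 2 := by
  simp [sq]

lemma sq_sub_ofReal_sq_im (z : ℂ) (F : ℝ) : (z ^ 2 - (F : ℂ) ^ 2).im = 2 * z.re * z.im := by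
  simp [sq]
  ring

lemma lt_re_or_re_lt_neg_of_notMem_segC (hz : z ∉ segC F) (him : z.im = 0) :
    F < z.re ∨ z.re < -F := by
  by_contra! h
  exact hz ⟨him, h.2, h.1⟩

lemma sq_sub_sq_mem_slitPlane_of_im_ne_zero (F : ℝ) (hz : z.im ≠ 0) :
    (F : ℂ) ^ 2 - z ^ 2 ∈ slitPlane := by
  rw [mem_slitPlane_iff]
  by_cases hre : z.re = 0
  · left
    simp only [sq, sub_re, mul_re, ofReal_re, ofReal_im, hre]
    nlinarith [mul_self_pos.2 hz, mul_self_nonneg F]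
  · right
    simp only [sq, sub_im, mul_im, ofReal_re, ofReal_im]
    intro h
    exact mul_ne_zero hre hz (by linarith)

lemma add_div_sub_mem_slitPlane (hF : 0 < F) (hz : z ∉ segC F) :
    (z + F) / (z - F) ∈ slitPlane := by
  rw [mem_slitPlane_iff]
  by_cases him : z.im = 0
  · left
    have hz_real : z = z.re := ext rfl (by simpa using him)
    rw [hz_real]
    norm_cast
    rcases lt_re_or_re_lt_neg_of_notMem_segC hz him with h | h
    · exact div_pos (by linarith) (by linarith)
    · exact div_pos_of_neg_of_neg (by linarith) (by linarith)
  · right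
    have hzF : z - F ≠ 0 := fun h ↦ him (by simpa using congrArg im h)
    simp only [div_im, add_im, sub_im, add_re, sub_re, ofReal_re, ofReal_im, add_zero, sub_zero,
      ← sub_div]
    refine div_ne_zero (fun h ↦ mul_ne_zero hF.ne' him ?_) (normSq_pos.2 hzF).ne'
    linear_combination -h / 2

lemma funT_of_re_pos (hz : 0 < z.re) : funT F z = (z ^ 2 - (F : ℂ) ^ 2) ^ (1 / 2 : ℂ) :=
  if_pos (Or.inl hz)

lemma funT_of_re_neg (hz : z.re < 0) : funT F z = -(z ^ 2 - (F : ℂ) ^ 2) ^ (1 / 2 : ℂ) :=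
  if_neg (by rintro (h | ⟨h, -⟩) <;> linarith)

lemma funT_of_im_pos (hz : 0 < z.im) : funT F z = I * ((F : ℂ) ^ 2 - z ^ 2) ^ (1 / 2 : ℂ) := by
  rw [← neg_sub, funT]
  split_ifs with hC
  · rw [neg_cpow_half_of_arg_neg_eq_sub_pi (arg_neg_eq_arg_sub_pi_iff.2 ?_)]
    · linear_combination (z ^ 2 - (F : ℂ) ^ 2) ^ (1 / 2 : ℂ) * I_sq
    rcases hC with h | ⟨h, -⟩
    · left; rw [sq_sub_ofReal_sq_im]; positivity
    · right; rw [sq_sub_ofReal_sq_im, sq_sub_ofReal_sq_re, h]; constructor <;> nlinarith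
  · rw [neg_cpow_half_of_arg_neg_eq_add_pi (arg_neg_eq_arg_add_pi_iff.2 (Or.inl ?_))]
    · linear_combination -(z ^ 2 - (F : ℂ) ^ 2) ^ (1 / 2 : ℂ) * I_sq
    have : z.re < 0 := by
      by_contra! h
      exact hC (h.lt_or_eq.imp id fun h0 ↦ ⟨h0.symm, hz.le⟩)
    rw [sq_sub_ofReal_sq_im]; nlinarith

lemma funT_of_im_neg (hz : z.im < 0) : funT F z = -I * ((F : ℂ) ^ 2 - z ^ 2) ^ (1 / 2 : ℂ) := by
  rw [← neg_sub, funT]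
  split_ifs with hC
  · rw [neg_cpow_half_of_arg_neg_eq_add_pi (arg_neg_eq_arg_add_pi_iff.2 (Or.inl ?_))]
    · linear_combination (z ^ 2 - (F : ℂ) ^ 2) ^ (1 / 2 : ℂ) * I_sq
    rcases hC with h | ⟨-, h⟩
    · rw [sq_sub_ofReal_sq_im]; nlinarith
    · linarith
  · rw [neg_cpow_half_of_arg_neg_eq_sub_pi (arg_neg_eq_arg_sub_pi_iff.2 ?_)]
    · linear_combination -(z ^ 2 - (F : ℂ) ^ 2) ^ (1 / 2 : ℂ) * I_sq
    have : z.re ≤ 0 := by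
      by_contra! h
      exact hC (Or.inl h)
    rcases this.lt_or_eq with h | h
    · left; rw [sq_sub_ofReal_sq_im]; nlinarith
    · right; rw [sq_sub_ofReal_sq_im, sq_sub_ofReal_sq_re, h]; constructor <;> nlinarith

lemma differentiableAt_funT (hF : 0 < F) (hz : z ∉ segC F) : DifferentiableAt ℂ (funT F) z := by
  have hp : DifferentiableAt ℂ (fun w : ℂ ↦ w ^ 2 - (F : ℂ) ^ 2) z := by fun_prop
  have hq : DifferentiableAt ℂ (fun w : ℂ ↦ (F : ℂ) ^ 2 - w ^ 2) z := by fun_prop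
  rcases lt_trichotomy z.im 0 with him | him | him
  · have hT : funT F =ᶠ[𝓝 z] fun w ↦ -I * ((F : ℂ) ^ 2 - w ^ 2) ^ (1 / 2 : ℂ) :=
      ((continuous_im.tendsto z).eventually (eventually_lt_nhds him)).mono
        fun _ ↦ funT_of_im_neg
    exact hT.differentiableAt_iff.2
      ((hq.cpow_const (sq_sub_sq_mem_slitPlane_of_im_ne_zero F him.ne)).const_mul _)
  · have hslit : z ^ 2 - (F : ℂ) ^ 2 ∈ slitPlane := by
      rw [mem_slitPlane_iff, sq_sub_ofReal_sq_re, him]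
      left
      rcases lt_re_or_re_lt_neg_of_notMem_segC hz him with h | h <;> nlinarith
    rcases lt_re_or_re_lt_neg_of_notMem_segC hz him with h | h
    · have hT : funT F =ᶠ[𝓝 z] fun w ↦ (w ^ 2 - (F : ℂ) ^ 2) ^ (1 / 2 : ℂ) :=
        ((continuous_re.tendsto z).eventually (eventually_gt_nhds (hF.trans h))).mono
          fun _ ↦ funT_of_re_pos
      exact hT.differentiableAt_iff.2 (hp.cpow_const hslit)
    · have hT : funT F =ᶠ[𝓝 z] fun w ↦ -(w ^ 2 - (F : ℂ) ^ 2) ^ (1 / 2 : ℂ) :=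
        ((continuous_re.tendsto z).eventually (eventually_lt_nhds (by linarith))).mono
          fun _ ↦ funT_of_re_neg
      exact hT.differentiableAt_iff.2 (hp.cpow_const hslit).neg
  · have hT : funT F =ᶠ[𝓝 z] fun w ↦ I * ((F : ℂ) ^ 2 - w ^ 2) ^ (1 / 2 : ℂ) :=
      ((continuous_im.tendsto z).eventually (eventually_gt_nhds him)).mono
        fun _ ↦ funT_of_im_pos
    exact hT.differentiableAt_iff.2
      ((hq.cpow_const (sq_sub_sq_mem_slitPlane_of_im_ne_zero F him.ne')).const_mul _)

lemma funU_eq_sub_funT_div (F : ℝ) : funU F = fun z ↦ (z - funT F z) / F := by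
  funext z
  simp only [funU, funT]
  split_ifs <;> ring

lemma differentiableAt_funW (hF : 0 < F) (hz : z ∉ segC F) : DifferentiableAt ℂ (funW F) z := by
  have hslit := add_div_sub_mem_slitPlane hF hz
  have hslit' : (z - F) / (z + F) ∈ slitPlane := inv_div (z + F) (z - F) ▸ inv_mem_slitPlane hslit
  have hne := div_ne_zero_iff.1 (slitPlane_ne_zero hslit)
  have hdiv : DifferentiableAt ℂ (fun w : ℂ ↦ (w + F) / (w - F)) z := by
    fun_prop (disch := exact hne.2)
  have hdiv' : DifferentiableAt ℂ (fun w : ℂ ↦ (w - F) / (w + F)) z := by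
    fun_prop (disch := exact hne.1)
  exact (hdiv.cpow_const hslit).add (hdiv'.cpow_const hslit')

end Segment

/-- for `F > 0`, the functions `U_F`, `T_F`, `W_F` are holomorphic on
`ℂ ∖ [−F,F]`. -/
theorem stmt9 (F : ℝ) (hF : 0 < F) :
    DifferentiableOn ℂ (funU F) (segC F)ᶜ ∧
    DifferentiableOn ℂ (funT F) (segC F)ᶜ ∧
    DifferentiableOn ℂ (funW F) (segC F)ᶜ := by
  have hT : DifferentiableOn ℂ (funT F) (segC F)ᶜ :=
    fun z hz ↦ (differentiableAt_funT hF hz).differentiableWithinAt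
  refine ⟨?_, hT, fun z hz ↦ (differentiableAt_funW hF hz).differentiableWithinAt⟩
  rw [funU_eq_sub_funT_div]
  exact (differentiableOn_id.sub hT).div_const _
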